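/- arXiv:0902.0833 — 3 statements merged into one kernel-verified Lean document; each statement's English description precedes it below -/
import Mathlib

section
/- Let β ∈ B_3^{+*} and let c be the <_right-greatest code of β. Then for every integer t ≥ −1, c_t is the largest natural number p such that β · (g_t^{p} g_{t−1}^{c_{t−1}} ⋯ g_0^{c_0} g_{−1}^{c_{−1}})^{−1} ∈ B_3^{+*}. (That is, the C-normal form coincides with the greedy rotating normal form obtained by repeatedly extracting maximal right divisors.) -/
/-- The defining relations of the braid group on `n` strands, inside the free group on
generators indexed by `ℕ`.  Generator `i` corresponds to the Artin generator `σ_i`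
(for `1 ≤ i ≤ n-1`); generators with index `0` or `≥ n` are killed. -/
def braidRels (n : ℕ) : Set (FreeGroup ℕ) :=
  {r | (∃ i j : ℕ, 1 ≤ i ∧ i + 2 ≤ j ∧ j ≤ n - 1 ∧
          r = FreeGroup.of i * FreeGroup.of j * (FreeGroup.of i)⁻¹ * (FreeGroup.of j)⁻¹) ∨
       (∃ i : ℕ, 1 ≤ i ∧ i + 1 ≤ n - 1 ∧
          r = FreeGroup.of i * FreeGroup.of (i+1) * FreeGroup.of i *
              (FreeGroup.of (i+1) * FreeGroup.of i * FreeGroup.of (i+1))⁻¹) ∨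
       (∃ i : ℕ, (i = 0 ∨ n ≤ i) ∧ r = FreeGroup.of i)}

/-- The braid group `B_n` on `n` strands. -/
abbrev Braid (n : ℕ) := PresentedGroup (braidRels n)

/-- The Artin generator `σ_i` of `B_n`. -/
def genσ (n i : ℕ) : Braid n := PresentedGroup.of i

/-- The band generator `a_{i,j} = (σ_{j-1} ⋯ σ_{i+1}) σ_i (σ_{i+1}⁻¹ ⋯ σ_{j-1}⁻¹)`. -/
def band (n i j : ℕ) : Braid n :=
  (((List.range' (i+1) (j-1-i)).reverse.map (genσ n)).prod) * genσ n i *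
    (((List.range' (i+1) (j-1-i)).reverse.map (genσ n)).prod)⁻¹

/-- The dual braid monoid `B_n^{+*}`: the submonoid of `B_n` generated by the band
generators `a_{i,j}`, `1 ≤ i < j ≤ n`. -/
def dualMonoid (n : ℕ) : Submonoid (Braid n) :=
  Submonoid.closure {x | ∃ i j : ℕ, 1 ≤ i ∧ i < j ∧ j ≤ n ∧ x = band n i j}

/-- The submonoid `B_I^{+*}` generated by the band generators `a_{i,j}` with `i, j ∈ I`. -/
def dualMonoidOn (n : ℕ) (I : Set ℕ) : Submonoid (Braid n) :=
  Submonoid.closure {x | ∃ i j : ℕ, i ∈ I ∧ j ∈ I ∧ 1 ≤ i ∧ i < j ∧ j ≤ n ∧ x = band n i j}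

/-- Evaluation of a word in the letters `σ_i^{±1}` (a letter is a pair of an index and a
sign, `true` meaning positive). -/
def evalWord (n : ℕ) (w : List (ℕ × Bool)) : Braid n :=
  (w.map (fun p => if p.2 then genσ n p.1 else (genσ n p.1)⁻¹)).prod

/-- `γ` is `σ_i`-positive: it is represented by a word in the letters `σ_1^{±1}, …,
σ_{n-1}^{±1}` containing at least one `σ_i`, no `σ_i⁻¹`, and no `σ_j^{±1}` with `j < i`. -/
def SigmaPositive (n i : ℕ) (γ : Braid n) : Prop :=
  ∃ w : List (ℕ × Bool),
    (∀ p ∈ w, 1 ≤ p.1 ∧ p.1 ≤ n - 1) ∧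
    (i, true) ∈ w ∧ (i, false) ∉ w ∧
    (∀ p ∈ w, i ≤ p.1) ∧
    evalWord n w = γ

/-- The Dehornoy ordering on `B_n`: `α <_D β` iff `α⁻¹β` is `σ_i`-positive for some `i`. -/
def dehornoyLt (n : ℕ) (α β : Braid n) : Prop :=
  ∃ i : ℕ, 1 ≤ i ∧ i ≤ n - 1 ∧ SigmaPositive n i (α⁻¹ * β)

/-- For `t ≥ -1`: `g_t = a_{1,2}` if `t ≡ 0 (mod 3)`, `g_t = a_{1,3}` if `t ≡ 1`,
and `g_t = a_{2,3}` if `t ≡ 2`. -/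
def g3 (t : ℤ) : Braid 3 :=
  if t % 3 = 0 then band 3 1 2 else if t % 3 = 1 then band 3 1 3 else band 3 2 3

/-- The product `g_t^{c_t} g_{t-1}^{c_{t-1}} ⋯ g_0^{c_0} g_{-1}^{c_{-1}}` (for `t ≥ -1`). -/
def tailProd3 (c : ℤ → ℕ) (t : ℤ) : Braid 3 :=
  ((List.range (t + 2).toNat).map (fun k => g3 (t - k) ^ c (t - k))).prod

/-- `c` is a code of `β ∈ B_3^{+*}`: `c` vanishes below `-1`, and for some `m` with
`c_t = 0` for all `t > m` one has `β = g_m^{c_m} ⋯ g_{-1}^{c_{-1}}`. -/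
def IsCode3 (β : Braid 3) (c : ℤ → ℕ) : Prop :=
  (∀ t : ℤ, t < -1 → c t = 0) ∧
  ∃ m : ℕ, (∀ t : ℤ, (m : ℤ) < t → c t = 0) ∧ β = tailProd3 c (m : ℤ)

/-- `c <_left c'`: at the largest index `l` where they differ, `c_l < c'_l`. -/
def codeLtLeft (c c' : ℤ → ℕ) : Prop :=
  ∃ l : ℤ, c l < c' l ∧ ∀ t : ℤ, l < t → c t = c' t

/-- `c <_right c'`: at the smallest index `l` where they differ, `c_l < c'_l`. -/
def codeLtRight (c c' : ℤ → ℕ) : Prop :=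
  ∃ l : ℤ, c l < c' l ∧ ∀ t : ℤ, t < l → c t = c' t

/-- `c` is the `<_right`-greatest code of `β`. -/
def IsGreatestCode3 (β : Braid 3) (c : ℤ → ℕ) : Prop :=
  IsCode3 β c ∧ ∀ c' : ℤ → ℕ, IsCode3 β c' → c' ≠ c → codeLtRight c' c

/-!
Codes can be concatenated: if `d` is a code of `x` and `c` a code of `y`, then `d`, shifted up
by a multiple `3 k` of `3` (which does not change the generators `g_t`) above the support of
`c`, followed by `c`, is a code of `x * y`. By induction over the band generators every element
of `B_3^{+*}` has a code. If `β (g_t^p g_{t-1}^{c_{t-1}} ⋯ g_{-1}^{c_{-1}})⁻¹` lay in `B_3^{+*}`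
for some `p > c_t`, then a code of it stacked on `c_{-1}, …, c_{t-1}, p` would be a code of `β`
that is `<_right`-larger than `c`. The value `p = c_t` is admissible, the quotient being
`g_m^{c_m} ⋯ g_{t+1}^{c_{t+1}}`.
-/

lemma g3_add_three_mul (t : ℤ) (k : ℕ) : g3 (t + 3 * k) = g3 t := by
  simp only [g3, Int.add_mul_emod_self_left]

lemma g3_mem_dualMonoid (t : ℤ) : g3 t ∈ dualMonoid 3 := by
  unfold g3
  split_ifs
  · exact Submonoid.subset_closure ⟨1, 2, by norm_num, by norm_num, by norm_num, rfl⟩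
  · exact Submonoid.subset_closure ⟨1, 3, by norm_num, by norm_num, by norm_num, rfl⟩
  · exact Submonoid.subset_closure ⟨2, 3, by norm_num, by norm_num, by norm_num, rfl⟩

lemma exists_band_eq_g3 {i j : ℕ} (hi : 1 ≤ i) (hij : i < j) (hj : j ≤ 3) :
    ∃ r : ℕ, band 3 i j = g3 r := by
  obtain ⟨rfl | rfl, rfl | rfl⟩ | ⟨rfl, rfl⟩ :
      (i = 1 ∧ (j = 2 ∨ j = 3)) ∨ (i = 2 ∧ j = 3) := by omega
  exacts [⟨0, by simp [g3]⟩, ⟨1, by simp [g3]⟩, ⟨2, by simp [g3]⟩]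

section tailProd3

variable {c c' : ℤ → ℕ} {t n : ℤ}

lemma tailProd3_eq_map (c : ℤ → ℕ) (t : ℤ) :
    tailProd3 c t = ((List.range (t + 2).toNat).map fun k : ℕ => g3 (t - k) ^ c (t - k)).prod := by
  simp only [tailProd3, List.pure_def, List.bind_eq_flatMap, ← List.map_eq_flatMap, List.map_map]
  rfl

lemma tailProd3_of_lt (c : ℤ → ℕ) (ht : t < -1) : tailProd3 c t = 1 := by
  simp [tailProd3_eq_map, show (t + 2).toNat = 0 by omega]

lemma tailProd3_zero (t : ℤ) : tailProd3 0 t = 1 := by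
  simp [tailProd3_eq_map]

lemma tailProd3_eq_mul (c : ℤ → ℕ) (ht : -1 ≤ t) :
    tailProd3 c t = g3 t ^ c t * tailProd3 c (t - 1) := by
  rw [tailProd3_eq_map, tailProd3_eq_map, show (t + 2).toNat = (t - 1 + 2).toNat + 1 by omega,
    List.range_succ_eq_map]
  simp only [List.map_cons, List.map_map, List.prod_cons, Nat.cast_zero, sub_zero]
  congr 3
  funext k
  simp only [Function.comp_apply, Nat.cast_succ]
  congr 2 <;> ring

lemma tailProd3_congr (h : ∀ u ≤ t, c u = c' u) : tailProd3 c t = tailProd3 c' t := by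
  simp only [tailProd3_eq_map]
  congr 1
  refine List.map_congr_left fun k _ => ?_
  rw [h _ (by omega)]

lemma tailProd3_eq_of_vanish (ht : -2 ≤ t) (htn : t ≤ n) (h : ∀ u, t < u → u ≤ n → c u = 0) :
    tailProd3 c n = tailProd3 c t := by
  induction n, htn using Int.leInduction with
  | base => rfl
  | succ n htn ih =>
    rw [tailProd3_eq_mul c (by omega), h _ (by omega) le_rfl, pow_zero, one_mul,
      add_sub_cancel_right, ih fun u hu hun => h u hu (by omega)]

lemma tailProd3_mul_inv_mem (ht : -2 ≤ t) (htn : t ≤ n) :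
    tailProd3 c n * (tailProd3 c t)⁻¹ ∈ dualMonoid 3 := by
  induction n, htn using Int.leInduction with
  | base => simp [(dualMonoid 3).one_mem]
  | succ n htn ih =>
    rw [tailProd3_eq_mul c (by omega), add_sub_cancel_right, mul_assoc]
    exact mul_mem (pow_mem (g3_mem_dualMonoid _) _) ih

end tailProd3

def codeConcat (d c : ℤ → ℕ) (t : ℤ) (k : ℕ) : ℤ → ℕ :=
  fun u => if u ≤ t then c u else d (u - 3 * k)

lemma tailProd3_codeConcat {d c : ℤ → ℕ} {t n : ℤ} {k : ℕ} (hd : ∀ u < -1, d u = 0)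
    (ht : -2 ≤ t) (hk : t + 2 ≤ 3 * k) (hn : -2 ≤ n) :
    tailProd3 (codeConcat d c t k) (n + 3 * k) = tailProd3 d n * tailProd3 c t := by
  induction n, hn using Int.leInduction with
  | base =>
    rw [tailProd3_of_lt d (by norm_num), one_mul,
      tailProd3_eq_of_vanish ht (by omega) fun u hu hu' => by
        simp only [codeConcat, if_neg (not_le.2 hu)]; exact hd _ (by omega)]
    exact tailProd3_congr fun u hu => if_pos hu
  | succ n hn ih =>
    have hconcat : codeConcat d c t k (n + 1 + 3 * k) = d (n + 1) := by
      simp only [codeConcat, if_neg (show ¬n + 1 + 3 * k ≤ t by omega), add_sub_cancel_right]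
    rw [tailProd3_eq_mul _ (by omega), hconcat, g3_add_three_mul,
      show n + 1 + 3 * k - 1 = n + 3 * k by ring, ih, tailProd3_eq_mul d (t := n + 1) (by omega),
      add_sub_cancel_right, mul_assoc]

lemma isCode3_codeConcat {x : Braid 3} {d c : ℤ → ℕ} {t : ℤ} {k : ℕ} (hx : IsCode3 x d)
    (hc : ∀ u < -1, c u = 0) (ht : -2 ≤ t) (hk : t + 2 ≤ 3 * k) :
    IsCode3 (x * tailProd3 c t) (codeConcat d c t k) := by
  obtain ⟨hd, m, hm, rfl⟩ := hx
  refine ⟨fun u hu => ?_, m + 3 * k, fun u hu => ?_, ?_⟩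
  · rw [codeConcat, if_pos (by omega)]
    exact hc u hu
  · rw [codeConcat, if_neg (by omega)]
    exact hm _ (by push_cast at hu; omega)
  · push_cast
    exact (tailProd3_codeConcat hd ht hk (by omega)).symm

lemma isCode3_single (r : ℕ) : IsCode3 (g3 r) (Pi.single (r : ℤ) 1) := by
  refine ⟨fun u hu => Pi.single_eq_of_ne (by omega) _, r,
    fun u hu => Pi.single_eq_of_ne (by omega) _, ?_⟩
  rw [tailProd3_eq_mul _ (by omega), Pi.single_eq_same, pow_one,
    tailProd3_congr (c' := 0) fun u hu => Pi.single_eq_of_ne (by omega) _, tailProd3_zero,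
    mul_one]

lemma exists_isCode3 {x : Braid 3} (hx : x ∈ dualMonoid 3) : ∃ c, IsCode3 x c := by
  induction hx using Submonoid.closure_induction with
  | mem x hx =>
    obtain ⟨i, j, hi, hij, hj, rfl⟩ := hx
    obtain ⟨r, hr⟩ := exists_band_eq_g3 hi hij hj
    exact ⟨_, hr ▸ isCode3_single r⟩
  | one => exact ⟨0, fun _ _ => rfl, 0, fun _ _ => rfl, (tailProd3_zero 0).symm⟩
  | mul x y _ _ hx hy =>
    obtain ⟨d, hd⟩ := hx
    obtain ⟨c, hc, m, -, rfl⟩ := hy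
    exact ⟨_, isCode3_codeConcat (k := m + 2) hd hc (by omega) (by omega)⟩

lemma codeLtRight_asymm {c c' : ℤ → ℕ} (h : codeLtRight c c') : ¬codeLtRight c' c := by
  rintro ⟨l', hlt', heq'⟩
  obtain ⟨l, hlt, heq⟩ := h
  rcases lt_trichotomy l l' with hll | rfl | hll
  · exact hlt.ne (heq' l hll).symm
  · exact lt_asymm hlt hlt'
  · exact hlt'.ne (heq l' hll).symm

theorem greatest_code_greedy_general (β : Braid 3)
    (c : ℤ → ℕ) (hc : IsGreatestCode3 β c) (t : ℤ) (ht : -1 ≤ t) :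
    IsGreatest {p : ℕ | β * (g3 t ^ p * tailProd3 c (t - 1))⁻¹ ∈ dualMonoid 3} (c t) := by
  obtain ⟨⟨hlow, m, hhigh, rfl⟩, hgreatest⟩ := hc
  refine ⟨?_, fun p hp => ?_⟩
  · show tailProd3 c m * (g3 t ^ c t * tailProd3 c (t - 1))⁻¹ ∈ dualMonoid 3
    rw [← tailProd3_eq_mul c ht, ← tailProd3_eq_of_vanish (n := max m t) (by omega)
      (le_max_left _ _) fun u hu _ => hhigh u hu]
    exact tailProd3_mul_inv_mem (by omega) (le_max_right _ _)
  by_contra! hlt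
  obtain ⟨d, hd⟩ := exists_isCode3 hp
  obtain ⟨c₀, hc₀t, hc₀⟩ : ∃ c₀ : ℤ → ℕ, c₀ t = p ∧ ∀ u ≠ t, c₀ u = c u :=
    ⟨Function.update c t p, Function.update_self .., fun u hu => Function.update_of_ne hu ..⟩
  have hprod : tailProd3 c₀ t = g3 t ^ p * tailProd3 c (t - 1) := by
    rw [tailProd3_eq_mul _ ht, hc₀t, tailProd3_congr fun u hu => hc₀ u (by omega)]
  have hcode := isCode3_codeConcat (c := c₀) (t := t) (k := (t + 2).toNat) hd
    (fun u (hu : u < -1) => (hc₀ u (by omega)).trans (hlow u hu)) (by omega) (by omega)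
  rw [hprod, inv_mul_cancel_right] at hcode
  set c' := codeConcat d c₀ t (t + 2).toNat
  have hc't : c' t = p := by simp [c', codeConcat, hc₀t]
  have hcc' : codeLtRight c c' :=
    ⟨t, hc't ▸ hlt, fun u hu => by simp [c', codeConcat, hu.le, hc₀ u hu.ne]⟩
  exact codeLtRight_asymm hcc' (hgreatest c' hcode fun h => hlt.ne' (h ▸ hc't).symm)

/-- Theorem: if `c` is the `<_right`-greatest code of `β ∈ B_3^{+*}`, then for every
`t ≥ -1`, `c t` is the largest `p` such that
`β ⬝ (g_t^p g_{t-1}^{c_{t-1}} ⋯ g_{-1}^{c_{-1}})⁻¹ ∈ B_3^{+*}`. -/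
theorem greatest_code_greedy (β : Braid 3) (hβ : β ∈ dualMonoid 3)
    (c : ℤ → ℕ) (hc : IsGreatestCode3 β c) (t : ℤ) (ht : -1 ≤ t) :
    IsGreatest {p : ℕ | β * (g3 t ^ p * tailProd3 c (t - 1))⁻¹ ∈ dualMonoid 3} (c t) :=
  greatest_code_greedy_general β c hc t ht
end

section
/- There exists an element γ ∈ B_n such that for all 1 ≤ i < j ≤ n: γ a_{i,j} γ^{−1} = a_{i+1,j+1} whenever j < n, and γ a_{i,n} γ^{−1} = a_{1,i+1}. (In other words, the cyclic shift a_{i,j} ↦ a_{[i+1],[j+1]} of band generators, with indices taken modulo n, is realized by an inner automorphism of B_n.) -/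
/-!
Take `γ = δ⁻¹` with `δ = σ_{n-1} ⋯ σ_1`. The relations give `σ_k δ = δ σ_{k+1}` for
`1 ≤ k ≤ n - 2`, so conjugation by `γ` shifts the index of every `σ_k` occurring in `a_{i,j}`
when `j < n`. For `j = n`, writing `δ = (σ_{n-1} ⋯ σ_{i+1}) (σ_i ⋯ σ_1)` cancels the
conjugating word of `a_{i,n}` and leaves `D⁻¹ σ_i D` with `D = σ_{i-1} ⋯ σ_1`. This equals
`a_{1,i+1} = E σ_1 E⁻¹` with `E = σ_i ⋯ σ_2` because `σ_i (D E) = (D E) σ_1`, which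
follows by induction on `i` from one braid relation at each step.
-/

namespace Braid

lemma mk_mem_braidRels {n : ℕ} {r : FreeGroup ℕ} (hr : r ∈ braidRels n) :
    PresentedGroup.mk (braidRels n) r = 1 :=
  (QuotientGroup.eq_one_iff r).2 (Subgroup.subset_normalClosure hr)

lemma genσ_eq_one {n i : ℕ} (h : i = 0 ∨ n ≤ i) : genσ n i = 1 :=
  mk_mem_braidRels (Or.inr (Or.inr ⟨i, h, rfl⟩))

lemma commute_genσ {n i j : ℕ} (h : i + 2 ≤ j) : Commute (genσ n i) (genσ n j) := by
  rcases Nat.eq_zero_or_pos i with rfl | hi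
  · rw [genσ_eq_one (Or.inl rfl)]; exact Commute.one_left _
  rcases le_or_gt n j with hj | hj
  · rw [genσ_eq_one (Or.inr hj)]; exact Commute.one_right _
  have := mk_mem_braidRels (n := n) (Or.inl ⟨i, j, hi, h, by omega, rfl⟩)
  simp only [map_mul, map_inv] at this
  exact mul_inv_eq_iff_eq_mul.1 (mul_inv_eq_one.1 this)

lemma genσ_braid {n i : ℕ} (h1 : 1 ≤ i) (h2 : i + 2 ≤ n) :
    genσ n i * genσ n (i + 1) * genσ n i = genσ n (i + 1) * genσ n i * genσ n (i + 1) := by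
  have := mk_mem_braidRels (n := n) (Or.inr (Or.inl ⟨i, h1, by omega, rfl⟩))
  simp only [map_mul, map_inv] at this
  exact mul_inv_eq_one.1 this

/-- `sigmaDesc n a k = σ_{a+k-1} ⋯ σ_{a+1} σ_a`. -/
def sigmaDesc (n a k : ℕ) : Braid n := ((List.range' a k).reverse.map (genσ n)).prod

lemma band_eq (n i j : ℕ) :
    band n i j =
      sigmaDesc n (i + 1) (j - 1 - i) * genσ n i * (sigmaDesc n (i + 1) (j - 1 - i))⁻¹ :=
  rfl

lemma sigmaDesc_succ (n a k : ℕ) : sigmaDesc n a (k + 1) = genσ n (a + k) * sigmaDesc n a k := by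
  simp [sigmaDesc, List.range'_concat]

lemma sigmaDesc_add (n a k l : ℕ) :
    sigmaDesc n a (k + l) = sigmaDesc n (a + k) l * sigmaDesc n a k := by
  rw [sigmaDesc, ← List.range'_append_1, List.reverse_append, List.map_append, List.prod_append]
  rfl

lemma commute_genσ_sigmaDesc {n i a k : ℕ}
    (h : ∀ m, a ≤ m → m < a + k → Commute (genσ n i) (genσ n m)) :
    Commute (genσ n i) (sigmaDesc n a k) := by
  refine Commute.list_prod_right _ _ fun x hx => ?_
  simp only [List.mem_map, List.mem_reverse, List.mem_range'_1] at hx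
  obtain ⟨m, ⟨hm1, hm2⟩, rfl⟩ := hx
  exact h m hm1 hm2

def delta (n : ℕ) : Braid n := sigmaDesc n 1 (n - 1)

lemma genσ_mul_delta {n k : ℕ} (h1 : 1 ≤ k) (h2 : k + 2 ≤ n) :
    genσ n k * delta n = delta n * genσ n (k + 1) := by
  obtain ⟨m, rfl⟩ : ∃ m, k = m + 1 := ⟨k - 1, by omega⟩
  have hsplit : delta n = sigmaDesc n (m + 3) (n - 3 - m) *
      (genσ n (m + 2) * (genσ n (m + 1) * sigmaDesc n 1 m)) := by
    rw [delta, show n - 1 = m + 2 + (n - 3 - m) by omega, sigmaDesc_add, sigmaDesc_succ,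
      sigmaDesc_succ]
    simp only [Nat.add_comm 1]
  have hfar : Commute (genσ n (m + 1)) (sigmaDesc n (m + 3) (n - 3 - m)) :=
    commute_genσ_sigmaDesc fun j hj _ => commute_genσ (by omega)
  have hnear : Commute (genσ n (m + 2)) (sigmaDesc n 1 m) :=
    commute_genσ_sigmaDesc fun j _ hj => (commute_genσ (by omega)).symm
  rw [hsplit]
  calc genσ n (m + 1) * (sigmaDesc n (m + 3) (n - 3 - m) *
        (genσ n (m + 2) * (genσ n (m + 1) * sigmaDesc n 1 m)))
      = sigmaDesc n (m + 3) (n - 3 - m) *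
        ((genσ n (m + 1) * genσ n (m + 2) * genσ n (m + 1)) * sigmaDesc n 1 m) := by
        rw [← mul_assoc, hfar.eq]; group
    _ = sigmaDesc n (m + 3) (n - 3 - m) *
        (genσ n (m + 2) * (genσ n (m + 1) * sigmaDesc n 1 m)) * genσ n (m + 2) := by
        rw [genσ_braid (by omega) h2]; simp only [mul_assoc, hnear.eq]

lemma conj_delta_inv_genσ {n k : ℕ} (h1 : 1 ≤ k) (h2 : k + 2 ≤ n) :
    MulAut.conj (delta n)⁻¹ (genσ n k) = genσ n (k + 1) := by
  rw [MulAut.conj_apply, inv_inv, mul_assoc, genσ_mul_delta h1 h2, inv_mul_cancel_left]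

lemma conj_delta_inv_sigmaDesc {n a k : ℕ} (h1 : 1 ≤ a) (h2 : a + k + 1 ≤ n) :
    MulAut.conj (delta n)⁻¹ (sigmaDesc n a k) = sigmaDesc n (a + 1) k := by
  rw [sigmaDesc, map_list_prod, List.map_map, sigmaDesc, Nat.add_comm a, ← List.map_add_range',
    List.map_reverse, List.map_reverse, List.map_map]
  refine congrArg (fun l : List (Braid n) => l.reverse.prod) (List.map_congr_left fun m hm => ?_)
  rw [List.mem_range'_1] at hm
  simp only [Function.comp_apply, conj_delta_inv_genσ (n := n) (by omega) (by omega : m + 2 ≤ n),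
    Nat.add_comm 1]

lemma conj_delta_inv_band {n i j : ℕ} (hi : 1 ≤ i) (hij : i < j) (hj : j < n) :
    MulAut.conj (delta n)⁻¹ (band n i j) = band n (i + 1) (j + 1) := by
  rw [band_eq, band_eq, map_mul, map_mul, map_inv (MulAut.conj (delta n)⁻¹),
    conj_delta_inv_sigmaDesc (by omega) (by omega), conj_delta_inv_genσ hi (by omega),
    show j + 1 - 1 - (i + 1) = j - 1 - i by omega]

lemma genσ_mul_sigmaDesc_mul_sigmaDesc {n m : ℕ} (h : m + 2 ≤ n) :
    genσ n (m + 1) * (sigmaDesc n 1 m * sigmaDesc n 2 m) =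
      sigmaDesc n 1 m * sigmaDesc n 2 m * genσ n 1 := by
  induction m with
  | zero => simp [sigmaDesc]
  | succ m ih =>
    have hfar : Commute (genσ n (m + 2)) (sigmaDesc n 1 m) :=
      commute_genσ_sigmaDesc fun j _ hj => (commute_genσ (by omega)).symm
    have hbraid := genσ_braid (n := n) (i := m + 1) (by omega) h
    simp only [sigmaDesc_succ, Nat.add_comm 1, Nat.add_comm 2]
    rw [show m + 1 + 1 = m + 2 from rfl] at hbraid ⊢
    calc genσ n (m + 2) *
          (genσ n (m + 1) * sigmaDesc n 1 m * (genσ n (m + 2) * sigmaDesc n 2 m))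
        = genσ n (m + 2) * genσ n (m + 1) * genσ n (m + 2) *
          (sigmaDesc n 1 m * sigmaDesc n 2 m) := by
          rw [mul_assoc (genσ n (m + 1)), ← mul_assoc (sigmaDesc n 1 m), ← hfar.eq]; group
      _ = genσ n (m + 1) * genσ n (m + 2) *
          (genσ n (m + 1) * (sigmaDesc n 1 m * sigmaDesc n 2 m)) := by
          rw [← hbraid]; group
      _ = genσ n (m + 1) * genσ n (m + 2) * (sigmaDesc n 1 m * sigmaDesc n 2 m * genσ n 1) := by
          rw [ih (by omega)]
      _ = genσ n (m + 1) * sigmaDesc n 1 m * (genσ n (m + 2) * sigmaDesc n 2 m) * genσ n 1 := by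
          simp only [mul_assoc]; rw [← mul_assoc (genσ n (m + 2)), hfar.eq, mul_assoc]

lemma conj_sigmaDesc_genσ {n m : ℕ} (h : m + 2 ≤ n) :
    (sigmaDesc n 1 m)⁻¹ * genσ n (m + 1) * sigmaDesc n 1 m = band n 1 (m + 2) := by
  rw [band_eq, show m + 2 - 1 - 1 = m by omega]
  calc (sigmaDesc n 1 m)⁻¹ * genσ n (m + 1) * sigmaDesc n 1 m
      = (sigmaDesc n 1 m)⁻¹ * (genσ n (m + 1) * (sigmaDesc n 1 m * sigmaDesc n 2 m)) *
          (sigmaDesc n 2 m)⁻¹ := by group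
    _ = sigmaDesc n 2 m * genσ n 1 * (sigmaDesc n 2 m)⁻¹ := by
        rw [genσ_mul_sigmaDesc_mul_sigmaDesc h]; group

lemma conj_delta_inv_band_last {n i : ℕ} (hi : 1 ≤ i) (hin : i < n) :
    MulAut.conj (delta n)⁻¹ (band n i n) = band n 1 (i + 1) := by
  obtain ⟨m, rfl⟩ : ∃ m, i = m + 1 := ⟨i - 1, by omega⟩
  obtain ⟨c, hc⟩ : ∃ c, n - 1 = m + 1 + c := ⟨n - 2 - m, by omega⟩
  have hsplit : delta n = sigmaDesc n (m + 1 + 1) c * (genσ n (m + 1) * sigmaDesc n 1 m) := by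
    rw [delta, hc, sigmaDesc_add, sigmaDesc_succ]
    simp only [Nat.add_comm 1]
  rw [MulAut.conj_apply, inv_inv, band_eq, show n - 1 - (m + 1) = c by omega, hsplit,
    ← conj_sigmaDesc_genσ (by omega)]
  group

end Braid

open Braid

theorem cyclic_shift_inner_general (n : ℕ) :
    ∃ γ : Braid n,
      (∀ i j : ℕ, 1 ≤ i → i < j → j < n →
        γ * band n i j * γ⁻¹ = band n (i + 1) (j + 1)) ∧
      (∀ i : ℕ, 1 ≤ i → i < n → γ * band n i n * γ⁻¹ = band n 1 (i + 1)) :=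
  ⟨(delta n)⁻¹, fun _ _ hi hij hj => conj_delta_inv_band hi hij hj,
    fun _ hi hin => conj_delta_inv_band_last hi hin⟩

/-- Theorem: the cyclic shift `a_{i,j} ↦ a_{[i+1],[j+1]}` of band generators is realized
by an inner automorphism of `B_n`: there is `γ ∈ B_n` with `γ a_{i,j} γ⁻¹ = a_{i+1,j+1}`
for `j < n` and `γ a_{i,n} γ⁻¹ = a_{1,i+1}`. -/
theorem cyclic_shift_inner (n : ℕ) (hn : 2 ≤ n) :
    ∃ γ : Braid n,
      (∀ i j : ℕ, 1 ≤ i → i < j → j < n →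
        γ * band n i j * γ⁻¹ = band n (i + 1) (j + 1)) ∧
      (∀ i : ℕ, 1 ≤ i → i < n → γ * band n i n * γ⁻¹ = band n 1 (i + 1)) :=
  cyclic_shift_inner_general n
end

section
/- Every element β of the braid group B_n can be written as β = U^{−1} V with U, V ∈ B_n^{+*}; that is, every braid is a left quotient of two dual positive braids. -/
section Fractions

variable {G : Type*} [Group G] {M : Submonoid G} {d : G}

theorem Submonoid.conj_mem_closure {s : Set G}
    (h : ∀ x ∈ s, d * x * d⁻¹ ∈ Submonoid.closure s) {m : G} (hm : m ∈ Submonoid.closure s) :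
    d * m * d⁻¹ ∈ Submonoid.closure s :=
  (Submonoid.closure_le (S := (Submonoid.closure s).comap (MulAut.conj d).toMonoidHom)).2 h hm

theorem Submonoid.conj_pow_mem (h : ∀ m ∈ M, d * m * d⁻¹ ∈ M) (k : ℕ) {m : G} (hm : m ∈ M) :
    d ^ k * m * (d ^ k)⁻¹ ∈ M := by
  induction k with
  | zero => simpa using hm
  | succ k ih => simpa [pow_succ', mul_assoc] using h _ ih

theorem exists_pow_mul_mem_of_closure_eq_top {s : Set G} (hs : Subgroup.closure s = ⊤)
    (hconj : ∀ m ∈ M, d * m * d⁻¹ ∈ M) (hsM : s ⊆ M) (hinv : ∀ x ∈ s, d * x⁻¹ ∈ M) (g : G) :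
    ∃ k : ℕ, d ^ k * g ∈ M := by
  have hg : g ∈ Subgroup.closure s := hs ▸ Subgroup.mem_top g
  induction hg using Subgroup.closure_induction'' with
  | mem x hx => exact ⟨0, by simpa using hsM hx⟩
  | inv_mem x hx => exact ⟨1, by simpa using hinv x hx⟩
  | one => exact ⟨0, by simp⟩
  | mul x y _ _ hx hy =>
    obtain ⟨k, hk⟩ := hx
    obtain ⟨l, hl⟩ := hy
    have : d ^ (l + k) * (x * y) = (d ^ l * (d ^ k * x) * (d ^ l)⁻¹) * (d ^ l * y) := by group
    exact ⟨l + k, this ▸ mul_mem (Submonoid.conj_pow_mem hconj l hk) hl⟩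

end Fractions

section Braid

variable {n : ℕ}

theorem genσ_eq_one {i : ℕ} (h : i = 0 ∨ n ≤ i) : genσ n i = 1 :=
  PresentedGroup.one_of_mem (Or.inr (Or.inr ⟨i, h, rfl⟩))

theorem genσ_commute {i j : ℕ} (h : i + 2 ≤ j) : Commute (genσ n i) (genσ n j) := by
  rcases Nat.eq_zero_or_pos i with rfl | hi
  · rw [genσ_eq_one (Or.inl rfl)]
    exact Commute.one_left _
  rcases le_or_gt n j with hj | hj
  · rw [genσ_eq_one (Or.inr hj)]
    exact Commute.one_right _
  · refine PresentedGroup.mk_eq_mk_of_mul_inv_mem (Or.inl ⟨i, j, hi, h, by omega, ?_⟩)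
    group

theorem genσ_braid {i : ℕ} (h1 : 1 ≤ i) (h2 : i + 2 ≤ n) :
    genσ n i * genσ n (i + 1) * genσ n i = genσ n (i + 1) * genσ n i * genσ n (i + 1) :=
  PresentedGroup.mk_eq_mk_of_mul_inv_mem (Or.inr (Or.inl ⟨i, h1, by omega, rfl⟩))


def ascend (n : ℕ) : ℕ → Braid n
  | 0 => 1
  | m + 1 => ascend n m * genσ n (m + 1)

def descend (n : ℕ) : ℕ → Braid n
  | 0 => 1
  | m + 1 => genσ n (m + 1) * descend n m

-- The half twist of the strands `1, …, m + 1`; the `Δ` of `B_n` is `halfTwist n (n - 1)`.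
def halfTwist (n : ℕ) : ℕ → Braid n
  | 0 => 1
  | m + 1 => ascend n (m + 1) * halfTwist n m

theorem commute_genσ_ascend {k m : ℕ} (h : m + 2 ≤ k) : Commute (genσ n k) (ascend n m) := by
  induction m with
  | zero => exact Commute.one_right _
  | succ m ih => exact (ih (by omega)).mul_right (genσ_commute (by omega)).symm

theorem commute_genσ_descend {k m : ℕ} (h : m + 2 ≤ k) : Commute (genσ n k) (descend n m) := by
  induction m with
  | zero => exact Commute.one_right _
  | succ m ih => exact (genσ_commute (by omega)).symm.mul_right (ih (by omega))

theorem commute_genσ_halfTwist {k m : ℕ} (h : m + 2 ≤ k) :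
    Commute (genσ n k) (halfTwist n m) := by
  induction m with
  | zero => exact Commute.one_right _
  | succ m ih => exact (commute_genσ_ascend h).mul_right (ih (by omega))

theorem ascend_mul_genσ {m i : ℕ} (hm : m + 1 ≤ n) (hi : 1 ≤ i) (him : i < m) :
    ascend n m * genσ n i = genσ n (i + 1) * ascend n m := by
  induction m with
  | zero => omega
  | succ m ih =>
    rcases Nat.lt_succ_iff_lt_or_eq.mp him with hlt | rfl
    · rw [ascend, mul_assoc, (genσ_commute (by omega : i + 2 ≤ m + 1)).symm.eq, ← mul_assoc,
        ih (by omega) hlt, mul_assoc]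
    · obtain ⟨j, rfl⟩ : ∃ j, i = j + 1 := ⟨i - 1, by omega⟩
      calc ascend n (j + 2) * genσ n (j + 1)
          = ascend n j * (genσ n (j + 1) * genσ n (j + 2) * genσ n (j + 1)) := by
            simp only [ascend, mul_assoc]
        _ = ascend n j * genσ n (j + 2) * (genσ n (j + 1) * genσ n (j + 2)) := by
            rw [genσ_braid hi (by omega)]
            simp only [mul_assoc]
        _ = genσ n (j + 1 + 1) * ascend n (j + 2) := by
            rw [← (commute_genσ_ascend (by omega)).eq]
            simp only [ascend, mul_assoc]

theorem genσ_mul_descend {m i : ℕ} (hm : m + 1 ≤ n) (hi : 1 ≤ i) (him : i < m) :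
    genσ n i * descend n m = descend n m * genσ n (i + 1) := by
  induction m with
  | zero => omega
  | succ m ih =>
    rcases Nat.lt_succ_iff_lt_or_eq.mp him with hlt | rfl
    · rw [descend, ← mul_assoc, (genσ_commute (by omega : i + 2 ≤ m + 1)).eq, mul_assoc,
        ih (by omega) hlt, ← mul_assoc]
    · obtain ⟨j, rfl⟩ : ∃ j, i = j + 1 := ⟨i - 1, by omega⟩
      calc genσ n (j + 1) * descend n (j + 2)
          = (genσ n (j + 1) * genσ n (j + 2) * genσ n (j + 1)) * descend n j := by
            simp only [descend, mul_assoc]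
        _ = genσ n (j + 2) * genσ n (j + 1) * (genσ n (j + 2) * descend n j) := by
            rw [genσ_braid hi (by omega)]
            simp only [mul_assoc]
        _ = descend n (j + 2) * genσ n (j + 1 + 1) := by
            rw [(commute_genσ_descend (by omega)).eq]
            simp only [descend, mul_assoc]

theorem halfTwist_succ_eq_mul_descend (m : ℕ) :
    halfTwist n (m + 1) = halfTwist n m * descend n (m + 1) := by
  induction m with
  | zero => simp [halfTwist, ascend, descend]
  | succ m ih =>
    calc halfTwist n (m + 2)
        = ascend n (m + 1) * (genσ n (m + 2) * halfTwist n m) * descend n (m + 1) := by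
          rw [halfTwist, ih, ascend]
          simp only [mul_assoc]
      _ = halfTwist n (m + 1) * descend n (m + 2) := by
          rw [(commute_genσ_halfTwist (by omega)).eq]
          simp only [halfTwist, descend, mul_assoc]

theorem halfTwist_mul_genσ {m i : ℕ} (hm : m + 1 ≤ n) (hi : 1 ≤ i) (him : i ≤ m) :
    halfTwist n m * genσ n i = genσ n (m + 1 - i) * halfTwist n m := by
  induction m generalizing i with
  | zero => omega
  | succ m ih =>
    rcases him.lt_or_eq with hlt | rfl
    · rw [halfTwist, mul_assoc, ih (by omega) hi (by omega), ← mul_assoc,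
        ascend_mul_genσ hm (by omega) (by omega), mul_assoc, show m + 1 - i + 1 = m + 2 - i by omega]
    · rcases Nat.eq_zero_or_pos m with rfl | hm0
      · simp [halfTwist, ascend]
      calc halfTwist n (m + 1) * genσ n (m + 1)
          = halfTwist n m * genσ n m * descend n (m + 1) := by
            rw [halfTwist_succ_eq_mul_descend, mul_assoc, ← genσ_mul_descend hm hm0 (by omega),
              mul_assoc]
        _ = genσ n (m + 1 + 1 - (m + 1)) * halfTwist n (m + 1) := by
            rw [ih (by omega) hm0 le_rfl, halfTwist_succ_eq_mul_descend, mul_assoc,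
              show m + 1 - m = 1 by omega, show m + 1 + 1 - (m + 1) = 1 by omega]

def posMonoid (n : ℕ) : Submonoid (Braid n) :=
  Submonoid.closure (Set.range (genσ n))

theorem genσ_mem_posMonoid (i : ℕ) : genσ n i ∈ posMonoid n :=
  Submonoid.subset_closure ⟨i, rfl⟩

theorem ascend_mem_posMonoid (m : ℕ) : ascend n m ∈ posMonoid n := by
  induction m with
  | zero => exact one_mem _
  | succ m ih => exact mul_mem ih (genσ_mem_posMonoid _)

theorem halfTwist_mem_posMonoid (m : ℕ) : halfTwist n m ∈ posMonoid n := by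
  induction m with
  | zero => exact one_mem _
  | succ m ih => exact mul_mem (ascend_mem_posMonoid _) ih

theorem exists_ascend_eq_genσ_one_mul {m : ℕ} (hm : 1 ≤ m) :
    ∃ t ∈ posMonoid n, ascend n m = genσ n 1 * t := by
  induction m with
  | zero => omega
  | succ m ih =>
    rcases Nat.eq_zero_or_pos m with rfl | hm0
    · exact ⟨1, one_mem _, by simp [ascend]⟩
    · obtain ⟨t, ht, he⟩ := ih hm0
      exact ⟨t * genσ n (m + 1), mul_mem ht (genσ_mem_posMonoid _), by rw [ascend, he, mul_assoc]⟩

theorem exists_halfTwist_eq_genσ_mul {m j : ℕ} (hm : m + 1 ≤ n) (hj : 1 ≤ j) (hjm : j ≤ m) :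
    ∃ t ∈ posMonoid n, halfTwist n m = genσ n j * t := by
  induction m generalizing j with
  | zero => omega
  | succ m ih =>
    rcases hj.eq_or_lt with rfl | hj1
    · obtain ⟨t, ht, he⟩ := exists_ascend_eq_genσ_one_mul (n := n) (m := m + 1) (by omega)
      exact ⟨t * halfTwist n m, mul_mem ht (halfTwist_mem_posMonoid _),
        by rw [halfTwist, he, mul_assoc]⟩
    · obtain ⟨t, ht, he⟩ := ih (by omega) (j := j - 1) (by omega) (by omega)
      refine ⟨ascend n (m + 1) * t, mul_mem (ascend_mem_posMonoid _) ht, ?_⟩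
      rw [halfTwist, he, ← mul_assoc, ascend_mul_genσ hm (by omega) (by omega),
        Nat.sub_add_cancel hj1.le, mul_assoc]

theorem halfTwist_mul_genσ_mul_inv_mem (i : ℕ) :
    halfTwist n (n - 1) * genσ n i * (halfTwist n (n - 1))⁻¹ ∈ posMonoid n := by
  by_cases h : 1 ≤ i ∧ i ≤ n - 1
  · rw [halfTwist_mul_genσ (by omega) h.1 h.2, mul_inv_cancel_right]
    exact genσ_mem_posMonoid _
  · rw [genσ_eq_one (by omega), mul_one, mul_inv_cancel]
    exact one_mem _

theorem halfTwist_mul_genσ_inv_mem (i : ℕ) :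
    halfTwist n (n - 1) * (genσ n i)⁻¹ ∈ posMonoid n := by
  by_cases h : 1 ≤ i ∧ i ≤ n - 1
  · obtain ⟨t, ht, he⟩ :=
      exists_halfTwist_eq_genσ_mul (n := n) (m := n - 1) (j := n - i) (by omega) (by omega)
        (by omega)
    have hconj := halfTwist_mul_genσ (n := n) (m := n - 1) (by omega) h.1 h.2
    rw [show n - 1 + 1 - i = n - i by omega] at hconj
    suffices halfTwist n (n - 1) = t * genσ n i by rwa [this, mul_inv_cancel_right]
    apply mul_left_cancel (a := genσ n (n - i))
    rw [← mul_assoc, ← he, hconj, he]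
  · rw [genσ_eq_one (by omega), inv_one, mul_one]
    exact halfTwist_mem_posMonoid _

theorem exists_halfTwist_pow_mul_mem_posMonoid (β : Braid n) :
    ∃ k : ℕ, halfTwist n (n - 1) ^ k * β ∈ posMonoid n := by
  refine exists_pow_mul_mem_of_closure_eq_top (PresentedGroup.closure_range_of _)
    (fun _ => Submonoid.conj_mem_closure ?_) Submonoid.subset_closure ?_ β
  all_goals rintro _ ⟨i, rfl⟩
  exacts [halfTwist_mul_genσ_mul_inv_mem i, halfTwist_mul_genσ_inv_mem i]

theorem band_self_succ (n i : ℕ) : band n i (i + 1) = genσ n i := by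
  simp [band]

theorem posMonoid_le_dualMonoid : posMonoid n ≤ dualMonoid n := by
  rw [posMonoid, Submonoid.closure_le]
  rintro _ ⟨i, rfl⟩
  by_cases h : 1 ≤ i ∧ i + 1 ≤ n
  · rw [← band_self_succ]
    exact Submonoid.subset_closure ⟨i, i + 1, h.1, by omega, h.2, rfl⟩
  · rw [genσ_eq_one (by omega)]
    exact one_mem _

end Braid

theorem braid_left_quotient_dual_general (n : ℕ) (β : Braid n) :
    ∃ U V : Braid n, U ∈ dualMonoid n ∧ V ∈ dualMonoid n ∧ β = U⁻¹ * V := by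
  obtain ⟨k, hk⟩ := exists_halfTwist_pow_mul_mem_posMonoid β
  exact ⟨halfTwist n (n - 1) ^ k, halfTwist n (n - 1) ^ k * β,
    posMonoid_le_dualMonoid (pow_mem (halfTwist_mem_posMonoid _) _), posMonoid_le_dualMonoid hk,
    by group⟩

/-- Theorem: every braid is a left quotient of two dual positive braids:
every `β ∈ B_n` can be written `β = U⁻¹ V` with `U, V ∈ B_n^{+*}`. -/
theorem braid_left_quotient_dual (n : ℕ) (hn : 2 ≤ n) (β : Braid n) :
    ∃ U V : Braid n, U ∈ dualMonoid n ∧ V ∈ dualMonoid n ∧ β = U⁻¹ * V :=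
  braid_left_quotient_dual_general n β
end
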